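/- arXiv:1705.01380 — 6 statements merged into one kernel-verified Lean document; each statement's English description precedes it below -/
import Mathlib

section
/- Let p be an odd prime and w a positive integer. For every integer u ≥ 0: (i) if gcd(u,p) = 1, then q_{p,w}(u) ≡ −u^w · w · q_p(u) (mod p); (ii) if p | u and w ≥ 2, then q_{p,w}(u) ≡ 0 (mod p); (iii) if w = 1 and u ≡ kp (mod p²) for an integer k, then q_{p,1}(u) ≡ k (mod p). -/
/-!
Everything reduces to computing `u ^ w - u ^ (w * p)` modulo `p ^ 2`: if it is `≡ c * p` there,
then the polynomial quotient is `≡ c` modulo `p`. For `u` prime to `p`, Fermat's little theorem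
gives `u ^ (p - 1) ≡ 1 + q_p(u) * p (mod p ^ 2)`, so by the binomial theorem
`u ^ (w * p) = u ^ w * (u ^ (p - 1)) ^ w ≡ u ^ w * (1 + w * q_p(u) * p)`. If `p ∣ u`, every power
`u ^ n` with `n ≥ 2` vanishes modulo `p ^ 2`, which leaves `0` for `w ≥ 2` and `u ≡ k * p` for `w = 1`.
-/

open Finset

noncomputable section

/-- The Fermat quotient `q_p(u)`: for `gcd(u,p)=1` the unique integer in `[0,p-1]`
congruent to `(u^(p-1)-1)/p` mod `p`, and `0` when `p ∣ u`. -/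
def fermatQuot (p u : ℕ) : ℕ :=
  if p ∣ u then 0 else ((u ^ (p - 1) - 1) / p) % p

/-- The polynomial quotient `q_{p,w}(u)`: the unique integer in `[0,p-1]`
congruent to `(u^w - u^(w*p))/p` mod `p`. -/
def polyQuot (p w u : ℕ) : ℤ :=
  (((u : ℤ) ^ w - (u : ℤ) ^ (w * p)) / (p : ℤ)) % (p : ℤ)

/-- The binary sequence `(f_u)`: `f_u = 0` iff the Legendre symbol of `q_{p,w}(u)`
is `1` or `q_{p,w}(u) = 0`. -/
def legSeq (p : ℕ) [Fact p.Prime] (w : ℕ) (u : ℕ) : ZMod 2 :=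
  if legendreSym p (polyQuot p w u) = 1 ∨ polyQuot p w u = 0 then 0 else 1

/-- The linear complexity of a binary sequence: the least order `L` of a linear
recurrence `s_{u+L} = c_{L-1} s_{u+L-1} + ⋯ + c_0 s_u` with `c_0 = 1` satisfied by `s`. -/
def linearComplexity (s : ℕ → ZMod 2) : ℕ :=
  sInf {L : ℕ | ∃ c : Fin L → ZMod 2,
    (∀ h : 0 < L, c ⟨0, h⟩ = 1) ∧
    ∀ u : ℕ, s (u + L) = ∑ i : Fin L, c i * s (u + (i : ℕ))}

/-- The map `H_w : u ↦ -w q_p(u) mod p` for `gcd(u,p)=1`, `0` if `p ∣ u` and `w ≥ 2`,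
and `k mod p` if `u ≡ kp (mod p²)` and `w = 1`. -/
def Hquot (p w u : ℕ) : ZMod p :=
  if p ∣ u then (if w = 1 then ((u / p : ℕ) : ZMod p) else 0)
  else -(w : ZMod p) * ((fermatQuot p u : ℕ) : ZMod p)

/-- `D_l = {u : 0 ≤ u < p², gcd(u,p) = 1, H_w(u) ≡ l (mod p)}`. -/
def Dset (p w : ℕ) (l : ZMod p) : Finset ℕ :=
  (Finset.range (p ^ 2)).filter fun u => Nat.Coprime u p ∧ Hquot p w u = l

/-- `Q_l = {u ∈ D_l : (u/p) = 1}`. -/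
def Qset (p : ℕ) [Fact p.Prime] (w : ℕ) (l : ZMod p) : Finset ℕ :=
  (Dset p w l).filter fun u => legendreSym p u = 1

/-- `N_l = {u ∈ D_l : (u/p) = -1}`. -/
def Nset (p : ℕ) [Fact p.Prime] (w : ℕ) (l : ZMod p) : Finset ℕ :=
  (Dset p w l).filter fun u => legendreSym p u = -1

/-- The quadratic residues modulo `p` in `{1,…,p-1}`. -/
def QRes (p : ℕ) [Fact p.Prime] : Finset ℕ :=
  (Finset.Ico 1 p).filter fun l => legendreSym p l = 1

/-- The quadratic non-residues modulo `p` in `{1,…,p-1}`. -/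
def QNR (p : ℕ) [Fact p.Prime] : Finset ℕ :=
  (Finset.Ico 1 p).filter fun l => legendreSym p l = -1

/-- Evaluation of `G^odd(x) = Σ_{l∈N} D_l(x) + Σ_{l=1}^{p-1} N_l(x)` at a point of the
algebraic closure of `F_2`. -/
def GoddEval (p : ℕ) [Fact p.Prime] (w : ℕ) (x : AlgebraicClosure (ZMod 2)) :
    AlgebraicClosure (ZMod 2) :=
  (∑ l ∈ QNR p, ∑ u ∈ Dset p w (l : ZMod p), x ^ u)
    + ∑ l ∈ Finset.Ico 1 p, ∑ u ∈ Nset p w (l : ZMod p), x ^ u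

/-- Evaluation of `G^one(x) = Σ_{l∈N} D_l(x) + Σ_{l=1}^{p-1} N_l(x) + Σ_{l∈N} x^{lp}`. -/
def GoneEval (p : ℕ) [Fact p.Prime] (w : ℕ) (x : AlgebraicClosure (ZMod 2)) :
    AlgebraicClosure (ZMod 2) :=
  GoddEval p w x + ∑ l ∈ QNR p, x ^ (l * p)

theorem ediv_modEq_of_modEq_mul_sq {a c p : ℤ} (hp : p ≠ 0) (h : a ≡ c * p [ZMOD p ^ 2]) :
    a / p ≡ c [ZMOD p] := by
  obtain ⟨t, ht⟩ := h.symm.dvd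
  have ha : a = p * (c + p * t) := by linear_combination ht
  rw [ha, Int.mul_ediv_cancel_left _ hp]
  exact Int.modEq_iff_dvd.mpr ⟨-t, by ring⟩

theorem polyQuot_modEq_of_modEq {p w u : ℕ} {c : ℤ} (hp : p ≠ 0)
    (h : (u : ℤ) ^ w - (u : ℤ) ^ (w * p) ≡ c * p [ZMOD (p : ℤ) ^ 2]) :
    polyQuot p w u ≡ c [ZMOD p] :=
  (Int.mod_modEq _ _).trans (ediv_modEq_of_modEq_mul_sq (by exact_mod_cast hp) h)

theorem sq_dvd_pow_of_dvd {R : Type*} [CommMonoid R] {a b : R} {n : ℕ} (h : a ∣ b) (hn : 2 ≤ n) :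
    a ^ 2 ∣ b ^ n :=
  (pow_dvd_pow a hn).trans (pow_dvd_pow_of_dvd h n)

theorem pow_sub_one_modEq_one_add_fermatQuot_mul {p u : ℕ} (hp : p.Prime) (hu : u.Coprime p) :
    u ^ (p - 1) ≡ 1 + fermatQuot p u * p [MOD p ^ 2] := by
  have hu0 : u ≠ 0 := by
    rintro rfl
    exact hp.one_lt.ne' (Nat.coprime_zero_left _ |>.mp hu)
  have hpos : 1 ≤ u ^ (p - 1) := Nat.one_le_pow _ _ (Nat.pos_of_ne_zero hu0)
  have hfermat : p ∣ u ^ (p - 1) - 1 :=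
    (Nat.modEq_iff_dvd' hpos).mp (Nat.ModEq.pow_card_sub_one_eq_one hp hu).symm
  set t := (u ^ (p - 1) - 1) / p
  have hfq : fermatQuot p u = t % p := if_neg ((hp.coprime_iff_not_dvd).mp hu.symm)
  have ht : u ^ (p - 1) = 1 + t * p := by
    rw [Nat.div_mul_cancel hfermat]
    exact (Nat.add_sub_of_le hpos).symm
  rw [ht, hfq, sq]
  exact Nat.ModEq.add_left 1 ((Nat.mod_modEq t p).symm.mul_right' p)

theorem one_add_mul_pow_modEq {p q : ℤ} (n : ℕ) :
    (1 + q * p) ^ n ≡ 1 + n * q * p [ZMOD p ^ 2] := by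
  have h := sq_dvd_add_pow_sub_sub (q * p) 1 n
  rw [one_pow, one_pow, one_mul, add_comm (1 : ℤ)] at h
  refine (Int.modEq_iff_dvd.mpr ((dvd_mul_left (p ^ 2) (q ^ 2)).trans ?_)).symm
  rw [← mul_pow]
  convert h using 1
  ring

theorem pow_sub_pow_mul_modEq_fermatQuot {p u : ℕ} (hp : p.Prime) (hu : u.Coprime p) (w : ℕ) :
    (u : ℤ) ^ w - (u : ℤ) ^ (w * p) ≡ (-(u : ℤ) ^ w * w * fermatQuot p u) * p
      [ZMOD (p : ℤ) ^ 2] := by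
  have hq : (u : ℤ) ^ (p - 1) ≡ 1 + fermatQuot p u * p [ZMOD (p : ℤ) ^ 2] := by
    exact_mod_cast Int.natCast_modEq_iff.mpr (pow_sub_one_modEq_one_add_fermatQuot_mul hp hu)
  have hsplit : (u : ℤ) ^ (w * p) = (u : ℤ) ^ w * ((u : ℤ) ^ (p - 1)) ^ w := by
    rw [← pow_mul, ← pow_add]
    congr 1
    have := Nat.le_mul_of_pos_right w hp.pos
    rw [Nat.sub_mul, one_mul, mul_comm p w]
    omega
  calc (u : ℤ) ^ w - (u : ℤ) ^ (w * p)
      ≡ (u : ℤ) ^ w - (u : ℤ) ^ w * (1 + w * fermatQuot p u * p) [ZMOD (p : ℤ) ^ 2] := by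
        rw [hsplit]
        exact .sub_left _ (((hq.pow w).trans (one_add_mul_pow_modEq w)).mul_left _)
    _ = (-(u : ℤ) ^ w * w * fermatQuot p u) * p := by ring

theorem polyQuot_eq_cases_general (p : ℕ) [hp : Fact p.Prime] (w : ℕ) (u : ℕ) :
    (Nat.Coprime u p →
      polyQuot p w u ≡ -(u : ℤ) ^ w * (w : ℤ) * (fermatQuot p u : ℤ) [ZMOD (p : ℤ)]) ∧
    (p ∣ u → 2 ≤ w → polyQuot p w u ≡ 0 [ZMOD (p : ℤ)]) ∧
    (w = 1 → ∀ k : ℤ, (u : ℤ) ≡ k * p [ZMOD ((p : ℤ) ^ 2)] →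
      polyQuot p 1 u ≡ k [ZMOD (p : ℤ)]) := by
  have hp0 : p ≠ 0 := hp.out.ne_zero
  refine ⟨fun hu => polyQuot_modEq_of_modEq hp0 (pow_sub_pow_mul_modEq_fermatQuot hp.out hu w),
    fun hpu hw => polyQuot_modEq_of_modEq hp0 ?_, fun _ k hk => polyQuot_modEq_of_modEq hp0 ?_⟩
  · have hpu : (p : ℤ) ∣ u := Int.natCast_dvd_natCast.mpr hpu
    have hwp : 2 ≤ w * p := hw.trans (Nat.le_mul_of_pos_right w hp.out.pos)
    rw [zero_mul]
    exact Int.modEq_zero_iff_dvd.mpr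
      (dvd_sub (sq_dvd_pow_of_dvd hpu hw) (sq_dvd_pow_of_dvd hpu hwp))
  · have hpu : (p : ℤ) ∣ u :=
      (hk.of_dvd (dvd_pow_self _ two_ne_zero)).dvd_iff.mpr (dvd_mul_left _ _)
    have hup : (u : ℤ) ^ p ≡ 0 [ZMOD (p : ℤ) ^ 2] :=
      Int.modEq_zero_iff_dvd.mpr (sq_dvd_pow_of_dvd hpu hp.out.two_le)
    simpa only [pow_one, one_mul, sub_zero] using hk.sub hup

/-- Relation between the polynomial quotient and the Fermat quotient. -/
theorem polyQuot_eq_cases (p : ℕ) [hp : Fact p.Prime] (hodd : p ≠ 2)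
    (w : ℕ) (hw : 0 < w) (u : ℕ) :
    (Nat.Coprime u p →
      polyQuot p w u ≡ -(u : ℤ) ^ w * (w : ℤ) * (fermatQuot p u : ℤ) [ZMOD (p : ℤ)]) ∧
    (p ∣ u → 2 ≤ w → polyQuot p w u ≡ 0 [ZMOD (p : ℤ)]) ∧
    (w = 1 → ∀ k : ℤ, (u : ℤ) ≡ k * p [ZMOD ((p : ℤ) ^ 2)] →
      polyQuot p 1 u ≡ k [ZMOD (p : ℤ)]) :=
  polyQuot_eq_cases_general p (hp := hp) w u
end
end

section
/- Let p be an odd prime, w₁ an integer with 1 ≤ w₁ ≤ p−1, and w₂ ≥ 0 an integer. Then for every integer u with gcd(u,p) = 1, one has q_{p, w₁ + w₂(p−1)}(u) ≡ −u^{w₁}(w₁ − w₂) q_p(u) ≡ w₁^{−1}(w₁ − w₂) q_{p,w₁}(u) (mod p), where w₁^{−1} denotes the inverse of w₁ modulo p. -/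
open Finset

noncomputable section

/-!
Write `u^(p-1) = 1 + p Q` with `Q ≡ q_p(u) (mod p)`. Then `u^(wp) = u^w (1 + p Q)^w` and the
binomial theorem gives `u^w - u^(wp) ≡ -u^w w p Q (mod p²)`, i.e. `q_{p,w}(u) ≡ -u^w w q_p(u)`.
For `w = w₁ + w₂(p-1)` Fermat's little theorem turns `u^w` into `u^w₁` and `w` into `w₁ - w₂`
modulo `p`; comparing with the case `w = w₁` gives the second congruence.
-/

lemma exists_pow_sub_one_eq_one_add_mul_fermatQuot {p u : ℕ} (hp : p.Prime) (hu : u.Coprime p) :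
    ∃ Q : ℕ, u ^ (p - 1) = 1 + p * Q ∧ (Q : ZMod p) = fermatQuot p u := by
  have hpow : 1 ≤ u ^ (p - 1) :=
    Nat.one_le_pow _ _ (Nat.pos_of_ne_zero fun h => hp.ne_one (by simpa [h] using hu))
  obtain ⟨Q, hQ⟩ :=
    (Nat.modEq_iff_dvd' hpow).mp (Nat.ModEq.pow_card_sub_one_eq_one hp hu).symm
  refine ⟨Q, by omega, ?_⟩
  rw [fermatQuot, if_neg (hp.coprime_iff_not_dvd.mp hu.symm), hQ,
    Nat.mul_div_cancel_left _ hp.pos, ZMod.natCast_mod]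

lemma polyQuot_cast_eq_of_sub_eq_mul {p w u : ℕ} (hp : p ≠ 0) {T : ℤ}
    (h : (u : ℤ) ^ w - (u : ℤ) ^ (w * p) = p * T) : (polyQuot p w u : ZMod p) = T := by
  rw [polyQuot, ZMod.intCast_mod, h, Int.mul_ediv_cancel_left _ (by exact_mod_cast hp)]

theorem polyQuot_cast_eq_neg_pow_mul_fermatQuot {p : ℕ} [hp : Fact p.Prime] {u : ℕ}
    (hu : u.Coprime p) (w : ℕ) :
    (polyQuot p w u : ZMod p) = -(u : ZMod p) ^ w * w * fermatQuot p u := by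
  obtain ⟨Q, hQ, hQ_cast⟩ := exists_pow_sub_one_eq_one_add_mul_fermatQuot hp.out hu
  have hQ' : (u : ℤ) ^ (p - 1) = 1 + p * Q := by exact_mod_cast hQ
  have hwp : (u : ℤ) ^ (w * p) = u ^ w * (1 + p * Q) ^ w := by
    rw [← hQ', ← pow_mul, ← pow_add]
    conv_lhs => rw [← Nat.sub_add_cancel hp.out.one_le]
    ring
  obtain ⟨c, hc⟩ := sq_dvd_add_pow_sub_sub ((p : ℤ) * Q) 1 w
  rw [polyQuot_cast_eq_of_sub_eq_mul hp.out.ne_zero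
    (T := -(u : ℤ) ^ w * w * Q - u ^ w * p * Q ^ 2 * c)
    (by rw [hwp]; linear_combination (-(u : ℤ) ^ w) * hc), ← hQ_cast]
  push_cast
  rw [ZMod.natCast_self]
  ring

lemma ZMod.natCast_add_mul_sub_one (p a b : ℕ) [NeZero p] :
    ((a + b * (p - 1) : ℕ) : ZMod p) = a - b := by
  push_cast [Nat.cast_sub (NeZero.one_le : 1 ≤ p), ZMod.natCast_self]
  ring

lemma ZMod.pow_add_mul_sub_one {p : ℕ} [Fact p.Prime] {x : ZMod p} (hx : x ≠ 0) (a b : ℕ) :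
    x ^ (a + b * (p - 1)) = x ^ a := by
  rw [pow_add, pow_mul', ZMod.pow_card_sub_one_eq_one hx, one_pow, mul_one]

theorem polyQuot_reduction_general (p : ℕ) [hp : Fact p.Prime]
    (w₁ w₂ : ℕ) (hw₁ : 1 ≤ w₁) (hw₁' : w₁ ≤ p - 1)
    (u : ℕ) (hu : Nat.Coprime u p) :
    ((polyQuot p (w₁ + w₂ * (p - 1)) u : ZMod p)
        = -(u : ZMod p) ^ w₁ * ((w₁ : ZMod p) - (w₂ : ZMod p)) * (fermatQuot p u : ZMod p)) ∧
    ((polyQuot p (w₁ + w₂ * (p - 1)) u : ZMod p)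
        = (w₁ : ZMod p)⁻¹ * ((w₁ : ZMod p) - (w₂ : ZMod p)) * (polyQuot p w₁ u : ZMod p)) := by
  have hu_ne : (u : ZMod p) ≠ 0 := by
    rw [Ne, ZMod.natCast_eq_zero_iff]
    exact hp.out.coprime_iff_not_dvd.mp hu.symm
  have hw₁_ne : (w₁ : ZMod p) ≠ 0 := by
    rw [Ne, ZMod.natCast_eq_zero_iff]
    exact Nat.not_dvd_of_pos_of_lt hw₁ (by have := hp.out.pos; omega)
  have hfirst : (polyQuot p (w₁ + w₂ * (p - 1)) u : ZMod p)
      = -(u : ZMod p) ^ w₁ * ((w₁ : ZMod p) - (w₂ : ZMod p)) * (fermatQuot p u : ZMod p) := by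
    rw [polyQuot_cast_eq_neg_pow_mul_fermatQuot hu, ZMod.pow_add_mul_sub_one hu_ne,
      ZMod.natCast_add_mul_sub_one]
  refine ⟨hfirst, ?_⟩
  rw [hfirst, polyQuot_cast_eq_neg_pow_mul_fermatQuot hu]
  field_simp

/-- Reduction of `q_{p,w}` for `w = w₁ + w₂(p-1)` to the case `w₁ ≤ p-1`. -/
theorem polyQuot_reduction (p : ℕ) [hp : Fact p.Prime] (hodd : p ≠ 2)
    (w₁ w₂ : ℕ) (hw₁ : 1 ≤ w₁) (hw₁' : w₁ ≤ p - 1)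
    (u : ℕ) (hu : Nat.Coprime u p) :
    ((polyQuot p (w₁ + w₂ * (p - 1)) u : ZMod p)
        = -(u : ZMod p) ^ w₁ * ((w₁ : ZMod p) - (w₂ : ZMod p)) * (fermatQuot p u : ZMod p)) ∧
    ((polyQuot p (w₁ + w₂ * (p - 1)) u : ZMod p)
        = (w₁ : ZMod p)⁻¹ * ((w₁ : ZMod p) - (w₂ : ZMod p)) * (polyQuot p w₁ u : ZMod p)) :=
  polyQuot_reduction_general p (hp := hp) w₁ w₂ hw₁ hw₁' u hu
end
end

section
/- Let p be an odd prime and w an integer with 1 ≤ w ≤ p−1. If a ∈ Q_{l'} for some l' ∈ {0,...,p−1}, then aQ_l = Q_{(l+l') mod p} and aN_l = N_{(l+l') mod p} for every l ∈ {0,...,p−1}, where aS = {ab mod p² : b ∈ S}. -/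
/-!
In `ZMod (p^2)` the Fermat quotient is characterised by `u^(p-1) = 1 + p q_p(u)`; since
`p^2 = 0` there, multiplying two such identities shows that `q_p` (hence `H_w = -w q_p`) is
additive on residues prime to `p` modulo `p^2`. The Legendre symbol is multiplicative, so
multiplication by `a ∈ Q_{l'}` shifts `H_w` by `l'` and keeps the Legendre symbol. It permutes
the residues modulo `p^2` prime to `p`, hence maps `Q_l` onto `Q_{l+l'}` and `N_l` onto `N_{l+l'}`.
-/

open Finset

noncomputable section

lemma image_mul_mod_range {a n : ℕ} (ha : a.Coprime n) :
    (range n).image (fun b => a * b % n) = range n := by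
  have hsub : (range n).image (fun b => a * b % n) ⊆ range n := by
    intro c hc
    obtain ⟨b, hb, rfl⟩ := mem_image.mp hc
    exact mem_range.mpr (Nat.mod_lt _ (pos_of_ne_zero (by rintro rfl; simp at hb)))
  refine eq_of_subset_of_card_le hsub (card_image_of_injOn ?_).ge
  intro b hb b' hb' h
  exact Nat.ModEq.eq_of_lt_of_lt (Nat.ModEq.cancel_left_of_coprime (Nat.coprime_comm.mp ha) h)
    (mem_range.mp hb) (mem_range.mp hb')

lemma image_mul_mod_filter_range {a n : ℕ} (ha : a.Coprime n) (P Q : ℕ → Prop)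
    [DecidablePred P] [DecidablePred Q] (hPQ : ∀ b < n, Q (a * b % n) ↔ P b) :
    ((range n).filter P).image (fun b => a * b % n) = (range n).filter Q := by
  conv_rhs => rw [← image_mul_mod_range ha, filter_image]
  congr 1
  exact filter_congr fun b hb => (hPQ b (mem_range.mp hb)).symm

section Prime

variable {p : ℕ}

lemma coprime_mod_sq_iff (hp : p.Prime) (u : ℕ) : (u % p ^ 2).Coprime p ↔ u.Coprime p := by
  rw [Nat.coprime_comm, hp.coprime_iff_not_dvd, Nat.dvd_mod_iff (dvd_pow_self p two_ne_zero),
    ← hp.coprime_iff_not_dvd, Nat.coprime_comm]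

lemma mul_fermatQuot_add_one_modEq (hp : p.Prime) {u : ℕ} (hu : u.Coprime p) :
    p * fermatQuot p u + 1 ≡ u ^ (p - 1) [MOD p ^ 2] := by
  have hpos : 1 ≤ u ^ (p - 1) :=
    Nat.one_le_pow _ _ (Nat.pos_of_ne_zero fun hu0 => hp.one_lt.ne' (by simpa [hu0] using hu))
  have hdvd : p ∣ u ^ (p - 1) - 1 := by
    rw [← Nat.modEq_iff_dvd' hpos, ← Nat.totient_prime hp]
    exact (Nat.ModEq.pow_totient hu).symm
  rw [fermatQuot, if_neg (hp.coprime_iff_not_dvd.mp hu.symm)]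
  calc p * ((u ^ (p - 1) - 1) / p % p) + 1 ≡ p * ((u ^ (p - 1) - 1) / p) + 1 [MOD p ^ 2] := by
        rw [sq]; exact ((Nat.mod_modEq _ p).mul_left' p).add_right 1
    _ = u ^ (p - 1) := by rw [Nat.mul_div_cancel' hdvd, Nat.sub_add_cancel hpos]

lemma fermatQuot_mul_mod_sq (hp : p.Prime) {a b : ℕ} (ha : a.Coprime p) (hb : b.Coprime p) :
    (fermatQuot p (a * b % p ^ 2) : ZMod p) = fermatQuot p a + fermatQuot p b := by
  have hab : (a * b % p ^ 2).Coprime p :=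
    (coprime_mod_sq_iff hp _).mpr (Nat.coprime_mul_iff_left.mpr ⟨ha, hb⟩)
  have key : ((p * fermatQuot p (a * b % p ^ 2) : ℕ) : ZMod (p ^ 2)) =
      ((p * (fermatQuot p a + fermatQuot p b) : ℕ) : ZMod (p ^ 2)) := by
    have hc := (ZMod.natCast_eq_natCast_iff _ _ _).mpr (mul_fermatQuot_add_one_modEq hp hab)
    have ha' := (ZMod.natCast_eq_natCast_iff _ _ _).mpr (mul_fermatQuot_add_one_modEq hp ha)
    have hb' := (ZMod.natCast_eq_natCast_iff _ _ _).mpr (mul_fermatQuot_add_one_modEq hp hb)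
    have hp2 : (p : ZMod (p ^ 2)) ^ 2 = 0 := by rw [← Nat.cast_pow, ZMod.natCast_self]
    push_cast at hc ha' hb' ⊢
    rw [ZMod.natCast_mod, Nat.cast_mul] at hc
    linear_combination hc - (p * (fermatQuot p b : ZMod (p ^ 2)) + 1) * ha'
      - (a : ZMod (p ^ 2)) ^ (p - 1) * hb' + (fermatQuot p a * fermatQuot p b : ZMod (p ^ 2)) * hp2
  have key' : p * fermatQuot p (a * b % p ^ 2) ≡ p * (fermatQuot p a + fermatQuot p b)
      [MOD p * p] := by
    rw [← sq]; exact (ZMod.natCast_eq_natCast_iff _ _ _).mp key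
  exact_mod_cast (ZMod.natCast_eq_natCast_iff _ _ _).mpr
    ((Nat.ModEq.mul_left_cancel_iff' hp.ne_zero).mp key')

lemma Hquot_mul_mod_sq (hp : p.Prime) (w : ℕ) {a b : ℕ} (ha : a.Coprime p) (hb : b.Coprime p) :
    Hquot p w (a * b % p ^ 2) = Hquot p w a + Hquot p w b := by
  have hab : (a * b % p ^ 2).Coprime p :=
    (coprime_mod_sq_iff hp _).mpr (Nat.coprime_mul_iff_left.mpr ⟨ha, hb⟩)
  have not_dvd {u : ℕ} (hu : u.Coprime p) : ¬ p ∣ u := hp.coprime_iff_not_dvd.mp hu.symm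
  rw [Hquot, Hquot, Hquot, if_neg (not_dvd hab), if_neg (not_dvd ha), if_neg (not_dvd hb),
    fermatQuot_mul_mod_sq hp ha hb]
  ring

lemma legendreSym_natCast_mod_sq [Fact p.Prime] (u : ℕ) :
    legendreSym p ((u % p ^ 2 : ℕ) : ℤ) = legendreSym p u := by
  simp only [legendreSym, Int.cast_natCast]
  congr 1
  exact (ZMod.natCast_eq_natCast_iff _ _ _).mpr
    ((Nat.mod_modEq u _).of_dvd (dvd_pow_self p two_ne_zero))

lemma image_mul_mod_filter_legendreSym_Dset [Fact p.Prime] {w a : ℕ} {l' : ZMod p}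
    (haC : a.Coprime p) (haH : Hquot p w a = l') (haL : legendreSym p a = 1) (l : ZMod p)
    (ε : ℤ) :
    ((Dset p w l).filter fun u : ℕ => legendreSym p u = ε).image (fun b => a * b % p ^ 2) =
      (Dset p w (l + l')).filter fun u : ℕ => legendreSym p u = ε := by
  have hp : p.Prime := Fact.out
  simp only [Dset, filter_filter]
  refine image_mul_mod_filter_range (haC.pow_right 2) _ _ fun b _ => ?_
  rw [coprime_mod_sq_iff hp, Nat.coprime_mul_iff_left, legendreSym_natCast_mod_sq, Nat.cast_mul,
    legendreSym.mul, haL, one_mul, and_iff_right haC]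
  by_cases hb : b.Coprime p
  · rw [Hquot_mul_mod_sq hp w haC hb, haH, add_comm, add_left_inj]
  · simp only [hb, false_and]

end Prime

theorem Qset_Nset_smul_of_mem_Qset_general (p : ℕ) [hp : Fact p.Prime] (w : ℕ)
    (a : ℕ) (l l' : ZMod p) (ha : a ∈ Qset p w l') :
    (Qset p w l).image (fun b => a * b % p ^ 2) = Qset p w (l + l') ∧
    (Nset p w l).image (fun b => a * b % p ^ 2) = Nset p w (l + l') := by
  simp only [Qset, Dset, mem_filter] at ha
  obtain ⟨⟨-, haC, haH⟩, haL⟩ := ha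
  exact ⟨image_mul_mod_filter_legendreSym_Dset haC haH haL l 1,
    image_mul_mod_filter_legendreSym_Dset haC haH haL l (-1)⟩

/-- Facts (II) and (III): if `a ∈ Q_{l'}` then `aQ_l = Q_{(l+l') mod p}` and
`aN_l = N_{(l+l') mod p}`. -/
theorem Qset_Nset_smul_of_mem_Qset (p : ℕ) [hp : Fact p.Prime] (hodd : p ≠ 2)
    (w : ℕ) (hw1 : 1 ≤ w) (hw2 : w ≤ p - 1)
    (a : ℕ) (l l' : ZMod p) (ha : a ∈ Qset p w l') :
    (Qset p w l).image (fun b => a * b % p ^ 2) = Qset p w (l + l') ∧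
    (Nset p w l).image (fun b => a * b % p ^ 2) = Nset p w (l + l') :=
  Qset_Nset_smul_of_mem_Qset_general p (hp := hp) w a l l' ha
end
end

section
/- Let p be an odd prime and w an integer with 1 ≤ w ≤ p−1. If a ∈ N_{l'} for some l' ∈ {0,...,p−1}, then aQ_l = N_{(l+l') mod p} and aN_l = Q_{(l+l') mod p} for every l ∈ {0,...,p−1}, where aS = {ab mod p² : b ∈ S}. -/
open Finset

noncomputable section

/- The Fermat quotient is a logarithm on units modulo `p²`: `u ^ (p - 1) ≡ 1 + p q_p(u)`, and
multiplying two such congruences kills the `p²` cross term, so `q_p(uv) ≡ q_p(u) + q_p(v) (mod p)`.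
Hence on integers prime to `p`, `H_w(ab mod p²) = H_w(a) + H_w(b)`, while the Legendre symbol is
multiplicative. Multiplication by `a` modulo `p²` is a bijection of the units with inverse
multiplication by `a⁻¹`, so it maps `D_l` onto `D_{l + H_w(a)}` and flips quadratic character
when `(a/p) = -1`. -/

lemma natCast_eq_natCast_of_self_mul_eq {p c d : ℕ} (hp : p ≠ 0)
    (h : (p * c : ZMod (p ^ 2)) = p * d) : (c : ZMod p) = d := by
  rw [ZMod.natCast_eq_natCast_iff]
  refine Nat.ModEq.mul_left_cancel' hp ?_
  rw [← sq, ← ZMod.natCast_eq_natCast_iff]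
  exact_mod_cast h

lemma coprime_iff_of_natCast_eq_mul {p x u v : ℕ} (h : (x : ZMod (p ^ 2)) = u * v) :
    x.Coprime p ↔ u.Coprime p ∧ v.Coprime p := by
  simp only [← Nat.coprime_pow_right_iff two_pos _ p, ← ZMod.isUnit_iff_coprime, h,
    IsUnit.mul_iff]

section

variable {p : ℕ} [Fact p.Prime]

lemma natCast_pow_sub_one_eq_one_add_mul_fermatQuot {u : ℕ} (hu : u.Coprime p) :
    (u : ZMod (p ^ 2)) ^ (p - 1) = 1 + p * fermatQuot p u := by
  have hpu : ¬ p ∣ u := (Nat.Prime.coprime_iff_not_dvd Fact.out).mp hu.symm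
  have hfermat : 1 ≡ u ^ (p - 1) [MOD p] := by
    rw [← ZMod.natCast_eq_natCast_iff]
    push_cast
    rw [ZMod.pow_card_sub_one_eq_one]
    rwa [Ne, ZMod.natCast_eq_zero_iff]
  have hpos : 1 ≤ u ^ (p - 1) :=
    Nat.one_le_pow _ _ (Nat.pos_of_ne_zero fun hu0 => hpu (hu0 ▸ dvd_zero p))
  set t := (u ^ (p - 1) - 1) / p
  have hpow : u ^ (p - 1) = 1 + p * t := by
    rw [Nat.mul_div_cancel' ((Nat.modEq_iff_dvd' hpos).mp hfermat)]
    omega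
  have hmod : p * (t % p) ≡ p * t [MOD p ^ 2] := sq p ▸ (Nat.mod_modEq t p).mul_left' p
  have hq : fermatQuot p u = t % p := if_neg hpu
  rw [hq, ← Nat.cast_pow, hpow]
  exact_mod_cast ((ZMod.natCast_eq_natCast_iff _ _ _).mpr (hmod.add_left 1)).symm

lemma fermatQuot_eq_add_of_natCast_eq_mul {x u v : ℕ} (hu : u.Coprime p) (hv : v.Coprime p)
    (h : (x : ZMod (p ^ 2)) = u * v) :
    (fermatQuot p x : ZMod p) = fermatQuot p u + fermatQuot p v := by
  have hpp : (p * p : ZMod (p ^ 2)) = 0 := by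
    rw [← sq]; exact_mod_cast ZMod.natCast_self (p ^ 2)
  have key := natCast_pow_sub_one_eq_one_add_mul_fermatQuot
    ((coprime_iff_of_natCast_eq_mul h).mpr ⟨hu, hv⟩)
  rw [h, mul_pow, natCast_pow_sub_one_eq_one_add_mul_fermatQuot hu,
    natCast_pow_sub_one_eq_one_add_mul_fermatQuot hv] at key
  have hmul : (p * fermatQuot p x : ZMod (p ^ 2)) = p * (fermatQuot p u + fermatQuot p v : ℕ) := by
    push_cast
    linear_combination -key + (fermatQuot p u : ZMod (p ^ 2)) * fermatQuot p v * hpp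
  exact_mod_cast natCast_eq_natCast_of_self_mul_eq (Fact.out : p.Prime).ne_zero hmul

lemma Hquot_eq_add_of_natCast_eq_mul (w : ℕ) {x u v : ℕ} (hu : u.Coprime p) (hv : v.Coprime p)
    (h : (x : ZMod (p ^ 2)) = u * v) : Hquot p w x = Hquot p w u + Hquot p w v := by
  have not_dvd {y : ℕ} (hy : y.Coprime p) : ¬ p ∣ y :=
    (Nat.Prime.coprime_iff_not_dvd Fact.out).mp hy.symm
  rw [Hquot, Hquot, Hquot, if_neg (not_dvd hu), if_neg (not_dvd hv),
    if_neg (not_dvd ((coprime_iff_of_natCast_eq_mul h).mpr ⟨hu, hv⟩)),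
    fermatQuot_eq_add_of_natCast_eq_mul hu hv h]
  ring

lemma legendreSym_eq_mul_of_natCast_eq_mul {x u v : ℕ} (h : (x : ZMod (p ^ 2)) = u * v) :
    legendreSym p x = legendreSym p u * legendreSym p v := by
  have hmodp : (x : ZMod p) = u * v := by
    simpa using congrArg (ZMod.castHom (dvd_pow_self p two_ne_zero) (ZMod p)) h
  rw [← legendreSym.mul, legendreSym, legendreSym]
  push_cast
  rw [hmodp]

lemma image_mul_mod_filter_Dset (w : ℕ) {a : ℕ} (ha : a.Coprime p) (l : ZMod p) (s : ℤ) :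
    ((Dset p w l).filter fun u : ℕ => legendreSym p u = s).image (fun b => a * b % p ^ 2) =
      (Dset p w (l + Hquot p w a)).filter fun u : ℕ => legendreSym p u = legendreSym p a * s := by
  ext x
  simp only [mem_image, mem_filter, Dset, mem_range]
  constructor
  · rintro ⟨b, ⟨⟨-, hb, hbH⟩, hbs⟩, rfl⟩
    have h : ((a * b % p ^ 2 : ℕ) : ZMod (p ^ 2)) = a * b := by
      rw [ZMod.natCast_mod, Nat.cast_mul]
    refine ⟨⟨Nat.mod_lt _ (pow_pos (Fact.out : p.Prime).pos 2),
      (coprime_iff_of_natCast_eq_mul h).mpr ⟨ha, hb⟩, ?_⟩, ?_⟩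
    · rw [Hquot_eq_add_of_natCast_eq_mul w ha hb h, hbH, add_comm]
    · rw [legendreSym_eq_mul_of_natCast_eq_mul h, hbs]
  · rintro ⟨⟨hx, hxcop, hxH⟩, hxs⟩
    set b := ((a : ZMod (p ^ 2))⁻¹ * x).val
    have h : (x : ZMod (p ^ 2)) = a * b := by
      rw [ZMod.natCast_zmod_val, ← mul_assoc, ZMod.coe_mul_inv_eq_one a (ha.pow_right 2), one_mul]
    have hb : b.Coprime p := ((coprime_iff_of_natCast_eq_mul h).mp hxcop).2
    have ha0 : legendreSym p a ≠ 0 := by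
      rw [Ne, legendreSym.eq_zero_iff, Int.cast_natCast, ZMod.natCast_eq_zero_iff]
      exact (Nat.Prime.coprime_iff_not_dvd Fact.out).mp ha.symm
    refine ⟨b, ⟨⟨ZMod.val_lt _, hb, ?_⟩, ?_⟩, ?_⟩
    · rw [← add_left_inj (Hquot p w a), ← hxH, Hquot_eq_add_of_natCast_eq_mul w ha hb h, add_comm]
    · rw [← mul_right_inj' ha0, ← hxs, legendreSym_eq_mul_of_natCast_eq_mul h]
    · rw [← Nat.mod_eq_of_lt hx, ← ZMod.natCast_eq_natCast_iff', h, Nat.cast_mul]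

end

theorem Qset_Nset_smul_of_mem_Nset_general (p : ℕ) [hp : Fact p.Prime]
    (w : ℕ)
    (a : ℕ) (l l' : ZMod p) (ha : a ∈ Nset p w l') :
    (Qset p w l).image (fun b => a * b % p ^ 2) = Nset p w (l + l') ∧
    (Nset p w l).image (fun b => a * b % p ^ 2) = Qset p w (l + l') := by
  simp only [Nset, Dset, mem_filter, mem_range] at ha
  obtain ⟨⟨-, hacop, rfl⟩, haleg⟩ := ha
  have image_eq (s : ℤ) := image_mul_mod_filter_Dset w hacop l s
  rw [haleg] at image_eq
  exact ⟨by simpa [Qset, Nset] using image_eq 1, by simpa [Qset, Nset] using image_eq (-1)⟩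

/-- Facts (IV) and (V): if `a ∈ N_{l'}` then `aQ_l = N_{(l+l') mod p}` and
`aN_l = Q_{(l+l') mod p}`. -/
theorem Qset_Nset_smul_of_mem_Nset (p : ℕ) [hp : Fact p.Prime] (hodd : p ≠ 2)
    (w : ℕ) (hw1 : 1 ≤ w) (hw2 : w ≤ p - 1)
    (a : ℕ) (l l' : ZMod p) (ha : a ∈ Nset p w l') :
    (Qset p w l).image (fun b => a * b % p ^ 2) = Nset p w (l + l') ∧
    (Nset p w l).image (fun b => a * b % p ^ 2) = Qset p w (l + l') :=
  Qset_Nset_smul_of_mem_Nset_general p (hp := hp) w a l l' ha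
end
end

section
/- Let p be an odd prime, w an integer with 1 ≤ w ≤ p−1, and β a primitive p²-th root of unity in the algebraic closure of F_2. Then G^odd(β^0) = 0, and G^odd(β^{kp}) equals the image of the integer (p−1)/2 in F_2 for every k = 1, ..., p−1. -/
/-!
If `γ ^ p = 1` then `γ ^ u` depends only on `u % p`. The map `u ↦ (u mod p, H_w(u))` is a
bijection from the units modulo `p²` onto `(ℤ/p)ˣ × ℤ/p`: as `w` is invertible modulo `p`, equal
values of `H_w` mean equal Fermat quotients, i.e. `u^(p-1) ≡ v^(p-1) (mod p²)`, and together with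
`u ≡ v (mod p)` this forces `u ≡ v (mod p²)`. Hence `u ↦ u mod p` maps every `D_l` bijectively
onto `{1, …, p-1}` and every `N_l` onto the non-residues, so that in characteristic two
`G^odd(γ) = |N| ∑_{v=1}^{p-1} γ^v + (p-1) ∑_{v ∈ N} γ^v = ((p-1)/2) ∑_{v=1}^{p-1} γ^v`.
The last sum is `p - 1 = 0` at `γ = 1` and `-1 = 1` at the primitive `p`-th root `γ = β^(kp)`.
-/

open Finset

noncomputable section

namespace Nat

theorem modEq_sq_of_div_modEq (n : ℕ) {a b : ℕ} (ha : n ∣ a) (hb : n ∣ b)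
    (h : a / n ≡ b / n [MOD n]) : a ≡ b [MOD n ^ 2] := by
  simpa only [Nat.mul_div_cancel' ha, Nat.mul_div_cancel' hb, ← sq] using h.mul_left' n

theorem modEq_sq_of_modEq_of_pow_pred {n u v : ℕ} (hu : u.Coprime n) (h : u ≡ v [MOD n])
    (hpow : u ^ (n - 1) ≡ v ^ (n - 1) [MOD n ^ 2]) : u ≡ v [MOD n ^ 2] := by
  -- `u ≡ v [MOD n]` lifts to `u ^ n ≡ v ^ n [MOD n²]`; cancel the unit `u ^ (n - 1)`.
  rcases n with _ | n
  · simpa using h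
  have hpow_succ : u ^ (n + 1) ≡ v ^ (n + 1) [MOD (n + 1) ^ 2] := by
    rw [Nat.modEq_iff_dvd] at h ⊢
    push_cast at h ⊢
    simpa using dvd_sub_pow_of_dvd_sub h 1
  refine Nat.ModEq.cancel_left_of_coprime (c := u ^ n) ?_ ?_
  · exact Nat.Coprime.pow _ _ hu.symm
  · calc u ^ n * u = u ^ (n + 1) := (pow_succ u n).symm
      _ ≡ v ^ (n + 1) [MOD (n + 1) ^ 2] := hpow_succ
      _ = v ^ n * v := pow_succ v n
      _ ≡ u ^ n * v [MOD (n + 1) ^ 2] := hpow.symm.mul_right v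

end Nat

section FermatQuotient

variable {p : ℕ} [hp : Fact p.Prime]

theorem fermatQuot_of_coprime {u : ℕ} (hu : u.Coprime p) :
    fermatQuot p u = ((u ^ (p - 1) - 1) / p) % p :=
  if_neg (hp.out.coprime_iff_not_dvd.mp hu.symm)

theorem Hquot_of_coprime {w u : ℕ} (hu : u.Coprime p) :
    Hquot p w u = -(w : ZMod p) * (fermatQuot p u : ℕ) :=
  if_neg (hp.out.coprime_iff_not_dvd.mp hu.symm)

theorem pow_pred_modEq_sq_of_fermatQuot_modEq {u v : ℕ} (hu : u.Coprime p) (hv : v.Coprime p)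
    (h : fermatQuot p u ≡ fermatQuot p v [MOD p]) : u ^ (p - 1) ≡ v ^ (p - 1) [MOD p ^ 2] := by
  have fermat {x : ℕ} (hx : x.Coprime p) : x ^ (p - 1) ≡ 1 [MOD p] := by
    simpa [Nat.totient_prime hp.out] using Nat.ModEq.pow_totient hx
  have one_le {x : ℕ} (hx : x.Coprime p) : 1 ≤ x ^ (p - 1) :=
    Nat.one_le_pow _ _ <| Nat.pos_of_ne_zero fun h0 => hp.out.ne_one <| by simpa [h0] using hx
  rw [fermatQuot_of_coprime hu, fermatQuot_of_coprime hv, Nat.ModEq, Nat.mod_mod, Nat.mod_mod] at h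
  have hsub := Nat.modEq_sq_of_div_modEq p ((Nat.modEq_iff_dvd' (one_le hu)).mp (fermat hu).symm)
    ((Nat.modEq_iff_dvd' (one_le hv)).mp (fermat hv).symm) h
  simpa only [Nat.sub_add_cancel (one_le hu), Nat.sub_add_cancel (one_le hv)] using hsub.add_right 1

theorem modEq_sq_of_Hquot_eq {w u v : ℕ} (hw : ¬ p ∣ w) (hu : u.Coprime p) (hv : v.Coprime p)
    (hmod : u ≡ v [MOD p]) (hH : Hquot p w u = Hquot p w v) : u ≡ v [MOD p ^ 2] := by
  rw [Hquot_of_coprime hu, Hquot_of_coprime hv] at hH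
  have hw0 : -(w : ZMod p) ≠ 0 := neg_ne_zero.mpr <| by rwa [Ne, ZMod.natCast_eq_zero_iff]
  refine Nat.modEq_sq_of_modEq_of_pow_pred hu hmod (pow_pred_modEq_sq_of_fermatQuot_modEq hu hv ?_)
  exact (ZMod.natCast_eq_natCast_iff _ _ _).mp (mul_left_cancel₀ hw0 hH)

end FermatQuotient

section Residues

variable {p : ℕ} [hp : Fact p.Prime]

theorem card_filter_coprime_range_sq : #{u ∈ range (p ^ 2) | u.Coprime p} = p * (p - 1) := by
  have h : Nat.totient (p ^ 2) = p * (p - 1) := by simpa using Nat.totient_prime_pow_succ hp.out 1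
  rw [← h, Nat.totient_eq_card_coprime]
  congr 1
  refine filter_congr fun u _ => ?_
  rw [Nat.coprime_comm, Nat.coprime_pow_left_iff two_pos]

theorem mod_mem_Ico_of_coprime {u : ℕ} (hu : u.Coprime p) : u % p ∈ Ico 1 p := by
  rw [mem_Ico, Nat.one_le_iff_ne_zero, Ne, ← Nat.dvd_iff_mod_eq_zero]
  exact ⟨hp.out.coprime_iff_not_dvd.mp hu.symm, Nat.mod_lt _ hp.out.pos⟩

theorem injOn_mod_Hquot {w : ℕ} (hw : ¬ p ∣ w) :
    Set.InjOn (fun u => (u % p, Hquot p w u)) ↑{u ∈ range (p ^ 2) | u.Coprime p} := by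
  intro u hu v hv huv
  simp only [coe_filter, mem_range, Set.mem_ofPred_eq, Prod.mk.injEq] at hu hv huv
  simpa [Nat.ModEq, Nat.mod_eq_of_lt hu.1, Nat.mod_eq_of_lt hv.1] using
    modEq_sq_of_Hquot_eq hw hu.2 hv.2 huv.1 huv.2

theorem image_mod_Hquot {w : ℕ} (hw : ¬ p ∣ w) :
    {u ∈ range (p ^ 2) | u.Coprime p}.image (fun u => (u % p, Hquot p w u)) =
      Ico 1 p ×ˢ (univ : Finset (ZMod p)) := by
  refine eq_of_subset_of_card_le ?_ ?_
  · simp only [subset_iff, mem_image, mem_filter, mem_product, mem_univ, and_true]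
    rintro _ ⟨u, ⟨-, hu⟩, rfl⟩
    exact mod_mem_Ico_of_coprime hu
  · rw [card_image_of_injOn (injOn_mod_Hquot hw), card_filter_coprime_range_sq, card_product,
      Nat.card_Ico, card_univ, ZMod.card, mul_comm]

theorem sum_Dset_comp_mod {M : Type*} [AddCommMonoid M] {w : ℕ} (hw : ¬ p ∣ w) (l : ZMod p)
    (f : ℕ → M) : ∑ u ∈ Dset p w l, f (u % p) = ∑ v ∈ Ico 1 p, f v := by
  calc ∑ u ∈ Dset p w l, f (u % p)
      = ∑ u ∈ {u ∈ range (p ^ 2) | u.Coprime p},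
          if Hquot p w u = l then f (u % p) else 0 := by
        rw [Dset, ← filter_filter, sum_filter]
    _ = ∑ x ∈ {u ∈ range (p ^ 2) | u.Coprime p}.image (fun u => (u % p, Hquot p w u)),
          if x.2 = l then f x.1 else 0 := by
        rw [sum_image (injOn_mod_Hquot hw)]
    _ = ∑ v ∈ Ico 1 p, f v := by
        rw [image_mod_Hquot hw, sum_product]
        simp

theorem sum_Nset_comp_mod {M : Type*} [AddCommMonoid M] {w : ℕ} (hw : ¬ p ∣ w) (l : ZMod p)
    (f : ℕ → M) : ∑ u ∈ Nset p w l, f (u % p) = ∑ v ∈ QNR p, f v := by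
  calc ∑ u ∈ Nset p w l, f (u % p)
      = ∑ u ∈ Dset p w l, if legendreSym p ↑(u % p) = -1 then f (u % p) else 0 := by
        rw [Nset, sum_filter]
        refine sum_congr rfl fun u _ => ?_
        rw [legendreSym.mod, ← Int.natCast_mod]
    _ = ∑ v ∈ QNR p, f v := by
        rw [sum_Dset_comp_mod hw l (fun v => if legendreSym p v = -1 then f v else 0), QNR,
          sum_filter]

theorem sum_range_legendreSym (hodd : p ≠ 2) : ∑ l ∈ range p, legendreSym p l = 0 := by
  rw [← quadraticChar_sum_zero ((ZMod.ringChar_zmod_n p).symm ▸ hodd)]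
  refine sum_nbij (fun l => (l : ZMod p)) (by simp) ?_ ?_ (by simp [legendreSym])
  · intro a ha b hb hab
    simp only [coe_range, Set.mem_Iio] at ha hb
    simpa [Nat.mod_eq_of_lt ha, Nat.mod_eq_of_lt hb] using
      (ZMod.natCast_eq_natCast_iff' a b p).mp hab
  · intro x _
    exact ⟨x.val, by simp [ZMod.val_lt], ZMod.natCast_zmod_val x⟩

-- The Legendre symbol sums to zero, so residues and non-residues are equally many.
theorem two_mul_card_QNR (hodd : p ≠ 2) : 2 * #(QNR p) = p - 1 := by
  have hsum : ∑ l ∈ Ico 1 p, legendreSym p l = 0 := by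
    rw [← sum_range_legendreSym hodd, range_eq_Ico, sum_eq_sum_Ico_succ_bot hp.out.pos]
    simp
  have hval : ∀ l ∈ Ico 1 p,
      legendreSym p l = 1 - 2 * if legendreSym p l = -1 then 1 else 0 := by
    intro l hl
    rw [mem_Ico] at hl
    have hl0 : ((l : ℤ) : ZMod p) ≠ 0 := by
      simpa [ZMod.natCast_eq_zero_iff] using Nat.not_dvd_of_pos_of_lt hl.1 hl.2
    rcases legendreSym.eq_one_or_neg_one p hl0 with h | h <;> simp [h]
  rw [sum_congr rfl hval, sum_sub_distrib, ← mul_sum, ← sum_filter, ← QNR] at hsum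
  simp only [sum_const, Nat.card_Ico, Int.nsmul_eq_mul, mul_one] at hsum
  omega

end Residues

theorem IsPrimitiveRoot.sum_Ico_one_pow_eq_neg_one {R : Type*} [CommRing R] [IsDomain R]
    {ζ : R} {n : ℕ} (hζ : IsPrimitiveRoot ζ n) (hn : 1 < n) : ∑ v ∈ Ico 1 n, ζ ^ v = -1 := by
  have h := hζ.geom_sum_eq_zero hn
  rw [range_eq_Ico, sum_eq_sum_Ico_succ_bot (by omega), pow_zero] at h
  exact eq_neg_of_add_eq_zero_right h

theorem natCast_sub_one_eq_zero_of_odd {R : Type*} [AddGroupWithOne R] [CharP R 2] {n : ℕ}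
    (hn : Odd n) : ((n - 1 : ℕ) : R) = 0 :=
  (CharP.cast_eq_zero_iff R 2 _).mpr (Nat.Odd.sub_odd hn odd_one).two_dvd

theorem GoddEval_eq_of_pow_eq_one {p : ℕ} [hp : Fact p.Prime] (hodd : p ≠ 2) {w : ℕ}
    (hw : ¬ p ∣ w) {γ : AlgebraicClosure (ZMod 2)} (hγ : γ ^ p = 1) :
    GoddEval p w γ = ((p - 1) / 2 : ℕ) * ∑ v ∈ Ico 1 p, γ ^ v := by
  have hpow (u : ℕ) : γ ^ u = γ ^ (u % p) := pow_eq_pow_mod u hγ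
  have hD (l : ℕ) : ∑ u ∈ Dset p w l, γ ^ u = ∑ v ∈ Ico 1 p, γ ^ v := by
    simpa only [← hpow] using sum_Dset_comp_mod hw l (γ ^ ·)
  have hN (l : ℕ) : ∑ u ∈ Nset p w l, γ ^ u = ∑ v ∈ QNR p, γ ^ v := by
    simpa only [← hpow] using sum_Nset_comp_mod hw l (γ ^ ·)
  have hcard : #(QNR p) = (p - 1) / 2 := by have := two_mul_card_QNR (p := p) hodd; omega
  simp only [GoddEval, hD, hN, sum_const, hcard, Nat.card_Ico, nsmul_eq_mul,
    natCast_sub_one_eq_zero_of_odd (hp.out.odd_of_ne_two hodd), zero_mul, add_zero]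

/-- Lemma: values of `G^odd` at `β^(kp)` for a primitive `p²`-th root of unity `β`. -/
theorem GoddEval_at_pow_kp (p : ℕ) [hp : Fact p.Prime] (hodd : p ≠ 2)
    (w : ℕ) (hw1 : 1 ≤ w) (hw2 : w ≤ p - 1)
    (β : AlgebraicClosure (ZMod 2)) (hβ : IsPrimitiveRoot β (p ^ 2)) :
    GoddEval p w (β ^ 0) = 0 ∧
    ∀ k : ℕ, 1 ≤ k → k ≤ p - 1 →
      GoddEval p w (β ^ (k * p)) = (((p - 1) / 2 : ℕ) : AlgebraicClosure (ZMod 2)) := by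
  have hw : ¬ p ∣ w := fun h => by have := Nat.le_of_dvd hw1 h; omega
  refine ⟨?_, fun k hk1 hk2 => ?_⟩
  · rw [pow_zero, GoddEval_eq_of_pow_eq_one hodd hw (one_pow p)]
    simp [natCast_sub_one_eq_zero_of_odd (hp.out.odd_of_ne_two hodd)]
  · have hk : k.Coprime p :=
      (hp.out.coprime_iff_not_dvd.mpr (Nat.not_dvd_of_pos_of_lt hk1 (by omega))).symm
    have hζ : IsPrimitiveRoot (β ^ (k * p)) p := by
      rw [pow_mul']
      exact (hβ.pow (pow_pos hp.out.pos 2) (sq p)).pow_of_coprime k hk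
    rw [GoddEval_eq_of_pow_eq_one hodd hw hζ.pow_eq_one,
      hζ.sum_Ico_one_pow_eq_neg_one hp.out.one_lt, mul_neg_one, CharTwo.neg_eq]
end
end

section
/- Let p be an odd prime, w an integer with 1 ≤ w ≤ p−1, and β a primitive p²-th root of unity in the algebraic closure of F_2. If 2 ∈ D_{ℓ₀} for some ℓ₀ with 1 ≤ ℓ₀ ≤ p−1, then D_l(β^n) ≠ 1 for all l ∈ {0,...,p−1} and all integers n with gcd(n,p) = 1. -/
open Finset

noncomputable section

/-! For `u`, `v` prime to `p`, `H_w(uv mod p²) = H_w(u) + H_w(v)`: the Fermat quotient is a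
logarithm, because `u^(p-1) ≡ 1 + p q_p(u) (mod p²)`. Hence multiplication by `2` maps `D_t`
bijectively onto `D_{ℓ₀+t}`, and as squaring is additive in characteristic `2`,
`D_t(x)² = D_{ℓ₀+t}(x)` whenever `x^(p²) = 1`. Let `x` be a primitive `p²`-th root of unity.
If `D_l(x) = 1`, then, `ℓ₀` generating `ℤ/p`, `D_t(x) = 1` for every `t`, and summing over `t`
gives `p = 1` in characteristic `2`. But `Σ_t D_t(x)` is the sum of the primitive `p²`-th roots
of unity, which vanishes. -/

theorem not_dvd_mod_sq_iff {p u : ℕ} : ¬ p ∣ u % p ^ 2 ↔ ¬ p ∣ u :=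
  not_congr (Nat.dvd_mod_iff (dvd_pow_self p two_ne_zero))

theorem mul_mul_mod_mod_of_mul_mod_eq_one {a b m u : ℕ} (hab : b * a % m = 1) (hu : u < m) :
    b * (a * u % m) % m = u := by
  rw [Nat.mul_mod_mod, ← mul_assoc, ← Nat.mod_mul_mod, hab, one_mul, Nat.mod_eq_of_lt hu]

theorem ZMod.forall_of_forall_add {p : ℕ} [Fact p.Prime] {ℓ : ZMod p} (hℓ : ℓ ≠ 0)
    {P : ZMod p → Prop} {l : ZMod p} (hl : P l) (hadd : ∀ t, P t → P (ℓ + t)) (t : ZMod p) :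
    P t := by
  have hsteps (k : ℕ) : P (k * ℓ + l) := by
    induction k with
    | zero => simpa using hl
    | succ k ih => simpa [add_mul, add_comm, add_left_comm] using hadd _ ih
  simpa [mul_assoc, inv_mul_cancel₀ hℓ] using hsteps ((t - l) * ℓ⁻¹).val

section FermatQuotient

variable {p : ℕ} [hp : Fact p.Prime]

theorem coprime_iff_not_dvd {u : ℕ} : Nat.Coprime u p ↔ ¬ p ∣ u :=
  Nat.coprime_comm.trans hp.out.coprime_iff_not_dvd

theorem natCast_pow_eq_one_add_mul_fermatQuot {u : ℕ} (hu : ¬ p ∣ u) :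
    (u : ZMod (p ^ 2)) ^ (p - 1) = 1 + p * fermatQuot p u := by
  have hfermat : 1 ≡ u ^ (p - 1) [MOD p] := by
    rw [← ZMod.natCast_eq_natCast_iff, Nat.cast_pow, Nat.cast_one,
      ZMod.pow_card_sub_one_eq_one (by rwa [Ne, ZMod.natCast_eq_zero_iff])]
  have hpos : 1 ≤ u ^ (p - 1) :=
    Nat.one_le_pow _ _ (Nat.pos_of_ne_zero (by rintro rfl; simp at hu))
  set Q := (u ^ (p - 1) - 1) / p
  have hQ : u ^ (p - 1) = 1 + p * (Q % p) + p ^ 2 * (Q / p) := by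
    rw [pow_two, mul_assoc, add_assoc, ← mul_add, Nat.mod_add_div,
      Nat.mul_div_cancel' ((Nat.modEq_iff_dvd' hpos).mp hfermat)]
    omega
  rw [fermatQuot, if_neg hu]
  change _ = 1 + p * ((Q % p : ℕ) : ZMod (p ^ 2))
  rw [← Nat.cast_pow, hQ, Nat.cast_add, Nat.cast_mul (p ^ 2), ZMod.natCast_self, zero_mul,
    add_zero]
  push_cast
  rfl

theorem natCast_eq_of_mul_eq_mul {n a b : ℕ} (hn : n ≠ 0) (h : (n * a : ZMod (n ^ 2)) = n * b) :
    (a : ZMod n) = b := by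
  rw [ZMod.natCast_eq_natCast_iff]
  refine Nat.ModEq.mul_left_cancel' hn ?_
  rw [← pow_two, ← ZMod.natCast_eq_natCast_iff]
  exact_mod_cast h

theorem natCast_fermatQuot_mul_mod {u v : ℕ} (hu : ¬ p ∣ u) (hv : ¬ p ∣ v) :
    (fermatQuot p (u * v % p ^ 2) : ZMod p) = fermatQuot p u + fermatQuot p v := by
  have huv : ¬ p ∣ u * v := hp.out.not_dvd_mul hu hv
  push_cast [← Nat.cast_add]
  refine natCast_eq_of_mul_eq_mul hp.out.ne_zero ?_
  have hsq : (p : ZMod (p ^ 2)) ^ 2 = 0 := by exact_mod_cast ZMod.natCast_self (p ^ 2)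
  have key := natCast_pow_eq_one_add_mul_fermatQuot (not_dvd_mod_sq_iff.mpr huv)
  rw [ZMod.natCast_mod, Nat.cast_mul, mul_pow, natCast_pow_eq_one_add_mul_fermatQuot hu,
    natCast_pow_eq_one_add_mul_fermatQuot hv] at key
  push_cast
  linear_combination -key + (fermatQuot p u * fermatQuot p v : ZMod (p ^ 2)) * hsq

theorem Hquot_mul_mod (w : ℕ) {u v : ℕ} (hu : ¬ p ∣ u) (hv : ¬ p ∣ v) :
    Hquot p w (u * v % p ^ 2) = Hquot p w u + Hquot p w v := by
  have huv : ¬ p ∣ u * v % p ^ 2 := not_dvd_mod_sq_iff.mpr (hp.out.not_dvd_mul hu hv)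
  rw [Hquot, Hquot, Hquot, if_neg huv, if_neg hu, if_neg hv, natCast_fermatQuot_mul_mod hu hv]
  ring

theorem Hquot_one (w : ℕ) : Hquot p w 1 = 0 := by
  simp [Hquot, fermatQuot, hp.out.ne_one]

theorem mul_mod_mem_Dset {w a u : ℕ} {l : ZMod p} (ha : ¬ p ∣ a) (hu : u ∈ Dset p w l) :
    a * u % p ^ 2 ∈ Dset p w (Hquot p w a + l) := by
  simp only [Dset, mem_filter, mem_range, coprime_iff_not_dvd] at hu ⊢
  obtain ⟨-, hu, rfl⟩ := hu
  exact ⟨Nat.mod_lt _ (pow_pos hp.out.pos 2),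
    not_dvd_mod_sq_iff.mpr (hp.out.not_dvd_mul ha hu), Hquot_mul_mod w ha hu⟩

end FermatQuotient

section Evaluation

variable {p : ℕ} [hp : Fact p.Prime] {w : ℕ}

theorem sum_Dset_pow_mul {R : Type*} [Semiring R] {x : R} (hx : x ^ (p ^ 2) = 1) {a : ℕ}
    (ha : ¬ p ∣ a) (t : ZMod p) :
    ∑ u ∈ Dset p w t, x ^ (a * u) = ∑ u ∈ Dset p w (Hquot p w a + t), x ^ u := by
  obtain ⟨b, -, hab⟩ := Nat.exists_mul_mod_eq_one_of_coprime
    ((coprime_iff_not_dvd.mpr ha).pow_right 2) (one_lt_pow₀ hp.out.one_lt two_ne_zero)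
  have hb : ¬ p ∣ b := fun h =>
    not_dvd_mod_sq_iff.mp (hab ▸ hp.out.not_dvd_one) (dvd_mul_of_dvd_right h a)
  have hHb : Hquot p w b = -Hquot p w a := by
    have := Hquot_mul_mod w ha hb
    rw [hab, Hquot_one] at this
    linear_combination -this
  have hlt {l : ZMod p} {u : ℕ} (hu : u ∈ Dset p w l) : u < p ^ 2 :=
    mem_range.mp (mem_filter.mp hu).1
  refine sum_nbij' (fun u => a * u % p ^ 2) (fun v => b * v % p ^ 2)
    (fun u hu => mul_mod_mem_Dset ha hu) (fun v hv => ?_)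
    (fun u hu => mul_mul_mod_mod_of_mul_mod_eq_one (by rwa [mul_comm]) (hlt hu))
    (fun v hv => mul_mul_mod_mod_of_mul_mod_eq_one hab (hlt hv))
    (fun u _ => pow_eq_pow_mod _ hx)
  simpa only [hHb, neg_add_cancel_left] using mul_mod_mem_Dset hb hv

theorem sum_Dset_pow_sq {R : Type*} [CommSemiring R] [CharP R 2] {x : R} (hx : x ^ (p ^ 2) = 1)
    (h2 : ¬ p ∣ 2) (t : ZMod p) :
    (∑ u ∈ Dset p w t, x ^ u) ^ 2 = ∑ u ∈ Dset p w (Hquot p w 2 + t), x ^ u := by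
  simp only [CharTwo.sum_sq, ← pow_mul, mul_comm _ 2]
  exact sum_Dset_pow_mul hx h2 t

theorem sum_range_sq_filter_coprime_pow_eq_zero {R : Type*} [CommRing R] [IsDomain R] {x : R}
    (hx : IsPrimitiveRoot x (p ^ 2)) :
    ∑ u ∈ range (p ^ 2) with u.Coprime p, x ^ u = 0 := by
  have hmultiples : {u ∈ range (p ^ 2) | ¬ u.Coprime p} = (range p).image (p * ·) := by
    ext u
    simp only [mem_filter, mem_range, mem_image, coprime_iff_not_dvd, not_not]
    constructor
    · rintro ⟨hu, k, rfl⟩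
      exact ⟨k, Nat.lt_of_mul_lt_mul_left (pow_two p ▸ hu), rfl⟩
    · rintro ⟨k, hk, rfl⟩
      exact ⟨pow_two p ▸ Nat.mul_lt_mul_of_pos_left hk hp.out.pos, dvd_mul_right p k⟩
  have hxp : IsPrimitiveRoot (x ^ p) p := by
    simpa [pow_two, hp.out.pos] using hx.pow_of_dvd hp.out.ne_zero (dvd_pow_self p two_ne_zero)
  have hsum := sum_filter_add_sum_filter_not (range (p ^ 2)) (·.Coprime p) (x ^ ·)
  rw [hmultiples, sum_image fun _ _ _ _ h => Nat.eq_of_mul_eq_mul_left hp.out.pos h] at hsum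
  simpa [pow_mul, hxp.geom_sum_eq_zero hp.out.one_lt,
    hx.geom_sum_eq_zero (one_lt_pow₀ hp.out.one_lt two_ne_zero)] using hsum

theorem sum_sum_Dset_pow_eq_zero {R : Type*} [CommRing R] [IsDomain R] {x : R}
    (hx : IsPrimitiveRoot x (p ^ 2)) : ∑ t : ZMod p, ∑ u ∈ Dset p w t, x ^ u = 0 := by
  simp only [Dset, ← filter_filter]
  rw [sum_fiberwise]
  exact sum_range_sq_filter_coprime_pow_eq_zero hx

end Evaluation

theorem Dset_eval_ne_one_general (p : ℕ) [hp : Fact p.Prime]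
    (w : ℕ)
    (β : AlgebraicClosure (ZMod 2)) (hβ : IsPrimitiveRoot β (p ^ 2))
    (ℓ₀ : ℕ) (hℓ₀1 : 1 ≤ ℓ₀) (hℓ₀2 : ℓ₀ ≤ p - 1) (h2 : 2 ∈ Dset p w (ℓ₀ : ZMod p)) :
    ∀ l : ℕ, l ≤ p - 1 → ∀ n : ℤ, Int.gcd n p = 1 →
      ∑ u ∈ Dset p w (l : ZMod p), (β ^ n) ^ u ≠ 1 := by
  intro l _ n hn hsum
  obtain ⟨-, h2p, hH2⟩ : 2 < p ^ 2 ∧ Nat.Coprime 2 p ∧ Hquot p w 2 = ℓ₀ := by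
    simpa [Dset] using h2
  have hx : IsPrimitiveRoot (β ^ n) (p ^ 2) := hβ.zpow_of_gcd_eq_one n <|
    Int.isCoprime_iff_gcd_eq_one.mp <| by
      exact_mod_cast (Int.isCoprime_iff_gcd_eq_one.mpr hn).pow_right
  have hℓ₀ : (ℓ₀ : ZMod p) ≠ 0 := by
    rw [Ne, ZMod.natCast_eq_zero_iff]
    exact Nat.not_dvd_of_pos_of_lt hℓ₀1 (by omega)
  have hall : ∀ t : ZMod p, ∑ u ∈ Dset p w t, (β ^ n) ^ u = 1 :=
    ZMod.forall_of_forall_add hℓ₀ hsum fun t ht => by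
      rw [← hH2, ← sum_Dset_pow_sq hx.pow_eq_one (coprime_iff_not_dvd.mp h2p), ht, one_pow]
  have hp_one : (p : AlgebraicClosure (ZMod 2)) = 1 :=
    natCast_eq_one_of_odd_of_two_eq_zero (Nat.coprime_two_left.mp h2p) CharTwo.two_eq_zero
  refine one_ne_zero (α := AlgebraicClosure (ZMod 2)) ?_
  calc 1 = ∑ t : ZMod p, ∑ u ∈ Dset p w t, (β ^ n) ^ u := by simp [hall, hp_one]
    _ = 0 := sum_sum_Dset_pow_eq_zero hx

/-- Lemma: if `2 ∈ D_{ℓ₀}` with `1 ≤ ℓ₀ ≤ p-1`, then `D_l(β^n) ≠ 1` for all `l` and all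
integers `n` coprime to `p`. -/
theorem Dset_eval_ne_one (p : ℕ) [hp : Fact p.Prime] (hodd : p ≠ 2)
    (w : ℕ) (hw1 : 1 ≤ w) (hw2 : w ≤ p - 1)
    (β : AlgebraicClosure (ZMod 2)) (hβ : IsPrimitiveRoot β (p ^ 2))
    (ℓ₀ : ℕ) (hℓ₀1 : 1 ≤ ℓ₀) (hℓ₀2 : ℓ₀ ≤ p - 1) (h2 : 2 ∈ Dset p w (ℓ₀ : ZMod p)) :
    ∀ l : ℕ, l ≤ p - 1 → ∀ n : ℤ, Int.gcd n p = 1 →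
      ∑ u ∈ Dset p w (l : ZMod p), (β ^ n) ^ u ≠ 1 :=
  Dset_eval_ne_one_general p (hp := hp) w β hβ ℓ₀ hℓ₀1 hℓ₀2 h2
end
end
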